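/- Let y₁,…,y_T ∈ ℝⁿ and δ₁,…,δ_T ∈ ℝᵐ be all nonzero with equal per-token magnitudes ‖δ_t‖·‖y_t‖ = w₀ > 0 for all t. Define the absolute-coherence proxy κ̂ = E_{s≠t}[|cos(y_t,y_s)|·|cos(δ_t,δ_s)|]. Then the alignment amplification satisfies the upper bound |𝒜 − 1| ≤ (T−1)·κ̂. -/

import Mathlib

open Matrix

/-- The Euclidean inner product on `ℝ^n`. -/
def edot {n : ℕ} (u v : Fin n → ℝ) : ℝ := ∑ i, u i * v i

/-- The Euclidean norm of a vector in `ℝ^n`. -/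
noncomputable def enorm' {n : ℕ} (v : Fin n → ℝ) : ℝ :=
  Real.sqrt (∑ i, v i ^ 2)

/-- The Frobenius norm of a real matrix. -/
noncomputable def frob {m n : ℕ} (M : Matrix (Fin m) (Fin n) ℝ) : ℝ :=
  Real.sqrt (∑ i, ∑ j, M i j ^ 2)

/-- The cosine of the angle between two vectors: `cos(u,v) = ⟨u,v⟩/(‖u‖‖v‖)`. -/
noncomputable def cosang {n : ℕ} (u v : Fin n → ℝ) : ℝ :=
  edot u v / (enorm' u * enorm' v)

lemma enorm_sq {n : ℕ} (v : Fin n → ℝ) : enorm' v ^ 2 = ∑ i, v i ^ 2 :=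
  Real.sq_sqrt (Finset.sum_nonneg fun _ _ => sq_nonneg _)

lemma enorm'_pos {n : ℕ} {v : Fin n → ℝ} (hv : v ≠ 0) : 0 < enorm' v := by
  rcases lt_or_eq_of_le (Real.sqrt_nonneg (∑ i, v i ^ 2)) with h | h
  · exact h
  · exfalso; apply hv
    have h2 : (∑ i, v i ^ 2) = 0 := by
      have := enorm_sq v
      rw [show enorm' v = 0 from h.symm] at this; simpa using this.symm
    funext i
    have := (Finset.sum_eq_zero_iff_of_nonneg (fun i _ => sq_nonneg (v i))).mp h2 i
      (Finset.mem_univ i)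
    exact pow_eq_zero_iff (by norm_num) |>.mp this

lemma edot_eq_cos {n : ℕ} {u v : Fin n → ℝ} (hu : u ≠ 0) (hv : v ≠ 0) :
    edot u v = cosang u v * (enorm' u * enorm' v) := by
  rw [cosang, div_mul_cancel₀]
  exact (mul_pos (enorm'_pos hu) (enorm'_pos hv)).ne'

lemma edot_self {n : ℕ} (v : Fin n → ℝ) : edot v v = enorm' v ^ 2 := by
  rw [enorm_sq, edot]; exact Finset.sum_congr rfl fun i _ => (sq _).symm

/-- **Absolute-coherence upper bound.** Under equal per-token magnitudes
(`‖δ_t‖‖y_t‖ = w₀ > 0`), with `κ̂ = E_{s≠t}[|cos(y_t,y_s)|·|cos(δ_t,δ_s)|]`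
(uniform average over the `T(T−1)` ordered pairs `s ≠ t`), the alignment
amplification satisfies `|𝒜 − 1| ≤ (T−1)·κ̂`. -/
theorem alignment_amplification_absolute_coherence_bound {T n m : ℕ} (hT : 1 ≤ T)
    (y : Fin T → Fin n → ℝ) (δ : Fin T → Fin m → ℝ)
    (hy : ∀ t, y t ≠ 0) (hδ : ∀ t, δ t ≠ 0)
    (w₀ : ℝ) (hw₀ : 0 < w₀)
    (hmag : ∀ t, enorm' (δ t) * enorm' (y t) = w₀)
    (κhat : ℝ)
    (hκhat : κhat =
        (∑ t, ∑ s ∈ Finset.univ.erase t, |cosang (y t) (y s)| * |cosang (δ t) (δ s)|)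
          / ((T : ℝ) * ((T : ℝ) - 1))) :
    |frob (∑ t, Matrix.vecMulVec (δ t) (y t)) ^ 2
        / (∑ t, enorm' (δ t) ^ 2 * enorm' (y t) ^ 2) - 1| ≤
      ((T : ℝ) - 1) * κhat := by
  have hTpos : (0:ℝ) < T := by exact_mod_cast hT
  have hD : (∑ t, enorm' (δ t) ^ 2 * enorm' (y t) ^ 2) = T * w₀ ^ 2 := by
    rw [Finset.sum_congr rfl (fun t _ => by
      rw [← mul_pow, hmag t]), Finset.sum_const, Finset.card_univ]
    simp [mul_comm]
  have hDpos : (0:ℝ) < T * w₀ ^ 2 := mul_pos hTpos (pow_pos hw₀ 2)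
  -- frobenius expansion
  have hF : frob (∑ t, Matrix.vecMulVec (δ t) (y t)) ^ 2
      = ∑ t, ∑ s, edot (δ t) (δ s) * edot (y t) (y s) := by
    rw [frob, Real.sq_sqrt (Finset.sum_nonneg fun i _ =>
      Finset.sum_nonneg fun j _ => sq_nonneg ((∑ t, Matrix.vecMulVec (δ t) (y t)) i j))]
    have expand : ∀ (i : Fin m) (j : Fin n),
        (∑ t, Matrix.vecMulVec (δ t) (y t)) i j = ∑ t, δ t i * y t j := by
      intro i j; simp [Matrix.sum_apply, Matrix.vecMulVec_apply]
    calc ∑ i, ∑ j, ((∑ t, Matrix.vecMulVec (δ t) (y t)) i j) ^ 2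
        = ∑ i, ∑ j, ∑ t, ∑ s, (δ t i * δ s i) * (y t j * y s j) := by
          refine Finset.sum_congr rfl fun i _ => Finset.sum_congr rfl fun j _ => ?_
          rw [expand, sq, Finset.sum_mul_sum]
          exact Finset.sum_congr rfl fun t _ => Finset.sum_congr rfl fun s _ => by ring
      _ = ∑ i, ∑ t, ∑ j, ∑ s, (δ t i * δ s i) * (y t j * y s j) := by
          refine Finset.sum_congr rfl fun i _ => ?_; rw [Finset.sum_comm]
      _ = ∑ t, ∑ i, ∑ j, ∑ s, (δ t i * δ s i) * (y t j * y s j) := by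
          rw [Finset.sum_comm]
      _ = ∑ t, ∑ i, ∑ s, ∑ j, (δ t i * δ s i) * (y t j * y s j) := by
          refine Finset.sum_congr rfl fun t _ => Finset.sum_congr rfl fun i _ => ?_
          rw [Finset.sum_comm]
      _ = ∑ t, ∑ s, ∑ i, ∑ j, (δ t i * δ s i) * (y t j * y s j) := by
          refine Finset.sum_congr rfl fun t _ => ?_; rw [Finset.sum_comm]
      _ = ∑ t, ∑ s, edot (δ t) (δ s) * edot (y t) (y s) := by
          refine Finset.sum_congr rfl fun t _ => Finset.sum_congr rfl fun s _ => ?_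
          rw [edot, edot, Finset.sum_mul_sum]
  -- split diag / offdiag
  have hsplit : (∑ t, ∑ s, edot (δ t) (δ s) * edot (y t) (y s))
      = T * w₀ ^ 2 + ∑ t, ∑ s ∈ Finset.univ.erase t,
          edot (δ t) (δ s) * edot (y t) (y s) := by
    have key : ∀ t : Fin T, (∑ s, edot (δ t) (δ s) * edot (y t) (y s))
        = edot (δ t) (δ t) * edot (y t) (y t)
          + ∑ s ∈ Finset.univ.erase t, edot (δ t) (δ s) * edot (y t) (y s) := fun t =>
      (Finset.add_sum_erase _ _ (Finset.mem_univ t)).symm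
    rw [Finset.sum_congr rfl fun t _ => key t, Finset.sum_add_distrib]
    congr 1
    rw [← hD]
    exact Finset.sum_congr rfl fun t _ => by rw [edot_self, edot_self]
  set off := ∑ t, ∑ s ∈ Finset.univ.erase t, edot (δ t) (δ s) * edot (y t) (y s) with hoff
  set K := ∑ t, ∑ s ∈ Finset.univ.erase t, |cosang (y t) (y s)| * |cosang (δ t) (δ s)|
    with hK
  have hbound : |off| ≤ K * w₀ ^ 2 := by
    rw [hoff, hK, Finset.sum_mul]
    refine (Finset.abs_sum_le_sum_abs _ _).trans (Finset.sum_le_sum fun t _ => ?_)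
    rw [Finset.sum_mul]
    refine (Finset.abs_sum_le_sum_abs _ _).trans (Finset.sum_le_sum fun s _ => le_of_eq ?_)
    rw [edot_eq_cos (hδ t) (hδ s), edot_eq_cos (hy t) (hy s)]
    simp only [abs_mul, abs_of_pos (enorm'_pos (hδ t)), abs_of_pos (enorm'_pos (hδ s)),
      abs_of_pos (enorm'_pos (hy t)), abs_of_pos (enorm'_pos (hy s))]
    have hw : enorm' (δ t) * enorm' (δ s) * (enorm' (y t) * enorm' (y s)) = w₀ ^ 2 := by
      rw [show enorm' (δ t) * enorm' (δ s) * (enorm' (y t) * enorm' (y s))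
        = (enorm' (δ t) * enorm' (y t)) * (enorm' (δ s) * enorm' (y s)) by ring,
        hmag t, hmag s, sq]
    linear_combination (|cosang (y t) (y s)| * |cosang (δ t) (δ s)|) * hw
  have hRHS : ((T : ℝ) - 1) * κhat = K / T := by
    rcases eq_or_lt_of_le hT with h1 | h2
    · have hT1 : (T : ℝ) = 1 := by exact_mod_cast h1.symm
      have hK0 : K = 0 := by
        rw [hK]
        refine Finset.sum_eq_zero fun t _ => Finset.sum_eq_zero fun s hs => ?_
        exact absurd (Fin.ext (by omega : s.val = t.val)) (Finset.mem_erase.mp hs).1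
      rw [hT1, hK0]; norm_num
    · have hT1' : (T:ℝ) - 1 ≠ 0 := by
        have : (1:ℝ) < T := by exact_mod_cast h2
        linarith
      rw [hκhat]
      rw [mul_comm (T:ℝ) ((T:ℝ)-1), ← div_div, mul_div_assoc',
        mul_div_assoc', mul_div_cancel_left₀ _ hT1']
  rw [hF, hsplit, hD, hRHS,
    show (↑T * w₀ ^ 2 + off) / (↑T * w₀ ^ 2) - 1 = off / (↑T * w₀ ^ 2) by
      rw [sub_eq_iff_eq_add, add_div, div_self hDpos.ne']; ring,
    abs_div, abs_of_pos hDpos, div_le_div_iff₀ hDpos hTpos]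
  calc |off| * T ≤ K * w₀ ^ 2 * T := mul_le_mul_of_nonneg_right hbound hTpos.le
    _ = K * (↑T * w₀ ^ 2) := by ring
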